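/- The Audenaert–Fannes inequality follows from the fundamental entropic inequality: if ρ₁, ρ₂ are density matrices on ℂ^d with (1/2)‖ρ₁ − ρ₂‖₁ = ε ∈ (0,1), then |S(ρ₁) − S(ρ₂)| ≤ ε log(d − 1) + h(ε). -/

import Mathlib

open Matrix BigOperators
open scoped ComplexOrder

noncomputable section

/-- `η(x) = -x log x` (with `log 0 = 0` convention). -/
def eta (x : ℝ) : ℝ := -(x * Real.log x)

/-- Shannon entropy of a (non-negative) vector. -/
def shannonH {n : ℕ} (p : Fin n → ℝ) : ℝ := ∑ i, eta (p i)

/-- Binary entropy `h(ε) = -ε log ε - (1-ε) log(1-ε)`. -/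
def binEnt (x : ℝ) : ℝ := -(x * Real.log x) - ((1 - x) * Real.log (1 - x))

/-- Eigenvalues of a Hermitian matrix in non-decreasing order. -/
def eigUp {d : ℕ} (A : Matrix (Fin d) (Fin d) ℂ) (hA : A.IsHermitian) : Fin d → ℝ :=
  hA.eigenvalues ∘ Tuple.sort hA.eigenvalues

/-- Eigenvalues of a Hermitian matrix in non-increasing order. -/
def eigDown {d : ℕ} (A : Matrix (Fin d) (Fin d) ℂ) (hA : A.IsHermitian) : Fin d → ℝ :=
  fun i => eigUp A hA i.rev

/-- Entries of a vector rearranged in non-increasing order. -/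
def sortDown {n : ℕ} (x : Fin n → ℝ) : Fin n → ℝ :=
  fun i => (x ∘ Tuple.sort x) i.rev

/-- `Majorizes y x` : the vector `x` is majorized by the vector `y`. -/
def Majorizes {n : ℕ} (y x : Fin n → ℝ) : Prop :=
  (∀ k : ℕ, ∑ j ∈ Finset.univ.filter (fun j : Fin n => (j : ℕ) < k), sortDown x j ≤
            ∑ j ∈ Finset.univ.filter (fun j : Fin n => (j : ℕ) < k), sortDown y j) ∧
  ∑ j, x j = ∑ j, y j

/-- Von Neumann entropy `S(A) = -Tr(A log A)` expressed via eigenvalues. -/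
def vnEntropy {n : Type*} [Fintype n] [DecidableEq n] (A : Matrix n n ℂ) : ℝ :=
  if hA : A.IsHermitian then ∑ i, eta (hA.eigenvalues i) else 0

/-- Trace norm of a Hermitian matrix: sum of absolute values of eigenvalues. -/
def traceNorm {n : Type*} [Fintype n] [DecidableEq n] (A : Matrix n n ℂ) : ℝ :=
  if hA : A.IsHermitian then ∑ i, |hA.eigenvalues i| else 0

/-- A density matrix: positive semi-definite with unit trace. -/
def IsDensity {n : Type*} [Fintype n] [DecidableEq n] (ρ : Matrix n n ℂ) : Prop :=
  ρ.PosSemidef ∧ ρ.trace = 1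

/-- Matrix logarithm via the spectral decomposition (with `log 0 = 0` convention). -/
def mlog {n : Type*} [Fintype n] [DecidableEq n] (A : Matrix n n ℂ) : Matrix n n ℂ :=
  if hA : A.IsHermitian then
    (hA.eigenvectorUnitary : Matrix n n ℂ)
      * Matrix.diagonal (fun i => (Real.log (hA.eigenvalues i) : ℂ))
      * (star (hA.eigenvectorUnitary : Matrix n n ℂ))
  else 0

/-- Umegaki relative entropy `D(ρ‖σ) = Tr(ρ (log ρ - log σ))`. -/
def relEnt {n : Type*} [Fintype n] [DecidableEq n] (ρ σ : Matrix n n ℂ) : ℝ :=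
  ((ρ * (mlog ρ - mlog σ)).trace).re

/-- Max-relative entropy `D_max(ρ‖σ) = inf {λ > 0 : ρ ≤ e^λ σ}`. -/
def dMax {n : Type*} [Fintype n] [DecidableEq n] (ρ σ : Matrix n n ℂ) : ℝ :=
  sInf {l : ℝ | 0 < l ∧ (Real.exp l • σ - ρ).PosSemidef}

/-- Partial trace over the first tensor factor. -/
def ptraceA {dA dB : ℕ} (ρ : Matrix (Fin dA × Fin dB) (Fin dA × Fin dB) ℂ) :
    Matrix (Fin dB) (Fin dB) ℂ :=
  Matrix.of fun i j => ∑ a, ρ (a, i) (a, j)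

/-- Conditional entropy `S(A|B)_ρ = S(ρ_{AB}) - S(ρ_B)`. -/
def condEnt {dA dB : ℕ} (ρ : Matrix (Fin dA × Fin dB) (Fin dA × Fin dB) ℂ) : ℝ :=
  vnEntropy ρ - vnEntropy (ptraceA ρ)

/-!
Measuring `ρ₁` in an eigenbasis of `ρ₂` cannot lower its entropy, since the diagonal of a
Hermitian matrix in any orthonormal basis is a doubly stochastic image of its spectrum and
`-x log x` is concave; by the same convexity it cannot raise the trace distance. This reduces
the claim to probability vectors `p, q` at total variation distance `δ ≤ ε`. Writing
`p = m + r`, `q = m + s` with `m = min p q`, subadditivity and concavity of `-x log x` give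
`H(p) - H(q) ≤ δ log (d - 1) + h(δ)`, and this `d`-ary entropy increases up to `1 - 1/d`.
Beyond `1 - 1/d` the `d`-ary entropy decreases instead; then `ρ₁` has an eigenvalue
`λ ≤ 1 - ε`, and `S(ρ₁) ≤ (1 - λ) log (d - 1) + h(λ) ≤ ε log (d - 1) + h(ε)`.
-/

open Real

lemma eta_eq_negMulLog : eta = negMulLog := by
  funext x; simp [eta, negMulLog]

lemma binEnt_eq_binEntropy : binEnt = binEntropy := by
  funext x; rw [binEnt, binEntropy_eq_negMulLog_add_negMulLog_one_sub, negMulLog, negMulLog]; ring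

lemma Finset.sum_abs_eq_two_mul_sum_max_zero {ι : Type*} [Fintype ι] {x : ι → ℝ}
    (hx : ∑ i, x i = 0) : ∑ i, |x i| = 2 * ∑ i, max (x i) 0 := by
  have hpt : ∀ i, |x i| = 2 * max (x i) 0 - x i := fun i => by
    rcases le_total (x i) 0 with h | h
    · rw [abs_of_nonpos h, max_eq_right h]; ring
    · rw [abs_of_nonneg h, max_eq_left h]; ring
  simp only [hpt, Finset.sum_sub_distrib, ← Finset.mul_sum, hx, sub_zero]

namespace Real

lemma negMulLog_add_le {x y : ℝ} (hx : 0 ≤ x) (hy : 0 ≤ y) :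
    negMulLog (x + y) ≤ negMulLog x + negMulLog y := by
  rcases hx.eq_or_lt with rfl | hx
  · simp
  rcases hy.eq_or_lt with rfl | hy
  · simp
  have hlx : log x ≤ log (x + y) := log_le_log hx (by linarith)
  have hly : log y ≤ log (x + y) := log_le_log hy (by linarith)
  simp only [negMulLog]
  nlinarith [mul_le_mul_of_nonneg_left hlx hx.le, mul_le_mul_of_nonneg_left hly hy.le]

lemma qaryEntropy_eq_negMulLog (q : ℕ) (p : ℝ) :
    qaryEntropy q p = negMulLog p + negMulLog (1 - p) + p * log (q - 1) := by
  rw [qaryEntropy, binEntropy_eq_negMulLog_add_negMulLog_one_sub]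
  push_cast
  ring

lemma sum_negMulLog_le {ι : Type*} (s : Finset ι) {v : ι → ℝ} (hv : ∀ i ∈ s, 0 ≤ v i) :
    ∑ i ∈ s, negMulLog (v i) ≤ negMulLog (∑ i ∈ s, v i) + (∑ i ∈ s, v i) * log s.card := by
  rcases s.eq_empty_or_nonempty with rfl | hs
  · simp
  have hcard : (0 : ℝ) < s.card := by exact_mod_cast hs.card_pos
  have hjensen := concaveOn_negMulLog.le_map_sum (t := s) (w := fun _ => (s.card : ℝ)⁻¹)
    (p := v) (fun _ _ => by positivity) (by simp [hcard.ne']) hv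
  simp only [smul_eq_mul] at hjensen
  rw [← Finset.mul_sum, ← Finset.mul_sum, negMulLog_mul] at hjensen
  have hinv : negMulLog (s.card : ℝ)⁻¹ = (s.card : ℝ)⁻¹ * log s.card := by
    simp [negMulLog, log_inv]
  rw [hinv] at hjensen
  refine le_of_mul_le_mul_left (hjensen.trans_eq ?_) (inv_pos.mpr hcard)
  ring

lemma negMulLog_add_mul_log_one_sub_le {m s δ : ℝ} (hm : 0 ≤ m) (hs : 0 ≤ s) (hsδ : s ≤ δ)
    (hδ : δ < 1) : negMulLog m + m * log (1 - δ) ≤ negMulLog (m + s) := by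
  rcases (hs.trans hsδ).eq_or_lt with rfl | hδ0
  · obtain rfl : s = 0 := le_antisymm hsδ hs
    simp
  have h1δ : 0 < 1 - δ := by linarith
  have hconc := concaveOn_negMulLog.2 (Set.mem_Ici.mpr (by positivity : 0 ≤ m / (1 - δ)))
    (Set.mem_Ici.mpr (by positivity : 0 ≤ s / δ)) h1δ.le hδ0.le (by ring)
  rw [smul_eq_mul, smul_eq_mul, smul_eq_mul, smul_eq_mul,
    mul_div_cancel₀ _ h1δ.ne', mul_div_cancel₀ _ hδ0.ne'] at hconc
  have hfirst : (1 - δ) * negMulLog (m / (1 - δ)) = negMulLog m + m * log (1 - δ) := by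
    rw [div_eq_mul_inv, negMulLog_mul]
    simp only [negMulLog, log_inv]
    field_simp
  have hsecond : 0 ≤ δ * negMulLog (s / δ) :=
    mul_nonneg hδ0.le (negMulLog_nonneg (by positivity) ((div_le_one hδ0).mpr hsδ))
  linarith

section Simplex

variable {ι : Type*} [Fintype ι] {p q : ι → ℝ} {ε : ℝ}

lemma sum_abs_sub_eq_two_mul_one_sub_sum_min (hp1 : ∑ i, p i = 1) (hq1 : ∑ i, q i = 1) :
    ∑ i, |p i - q i| = 2 * (1 - ∑ i, min (p i) (q i)) := by
  have hpt : ∀ i, |p i - q i| = p i + q i - 2 * min (p i) (q i) := fun i => by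
    rw [← max_sub_min_eq_abs', ← min_add_max (p i) (q i)]; ring
  simp only [hpt, Finset.sum_sub_distrib, Finset.sum_add_distrib, ← Finset.mul_sum, hp1, hq1]
  ring

variable [DecidableEq ι]

lemma sum_negMulLog_le_of_apply {v : ι → ℝ} (hv : ∀ i, 0 ≤ v i) (i₀ : ι) :
    ∑ i, negMulLog (v i) ≤ negMulLog (v i₀) + negMulLog (∑ i, v i - v i₀)
      + (∑ i, v i - v i₀) * log (Fintype.card ι - 1) := by
  have hrest := sum_negMulLog_le (Finset.univ.erase i₀) (fun i _ => hv i)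
  rw [Finset.sum_erase_eq_sub (f := v) (Finset.mem_univ i₀),
    Finset.card_erase_of_mem (Finset.mem_univ i₀), Finset.card_univ,
    Nat.cast_pred (Fintype.card_pos_iff.mpr ⟨i₀⟩)] at hrest
  rw [← Finset.add_sum_erase _ _ (Finset.mem_univ i₀)]
  linarith

lemma sum_negMulLog_sub_le_qaryEntropy (hp : ∀ i, 0 ≤ p i) (hq : ∀ i, 0 ≤ q i)
    (hp1 : ∑ i, p i = 1) (hq1 : ∑ i, q i = 1) (hm : 0 < ∑ i, min (p i) (q i)) :
    ∑ i, negMulLog (p i) - ∑ i, negMulLog (q i)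
      ≤ qaryEntropy (Fintype.card ι) (1 - ∑ i, min (p i) (q i)) := by
  set m := fun i => min (p i) (q i) with hm_def
  set δ := 1 - ∑ i, m i with hδ_def
  have hm0 : ∀ i, 0 ≤ m i := fun i => le_min (hp i) (hq i)
  have hr : ∀ i, 0 ≤ p i - m i := fun i => sub_nonneg.mpr (min_le_left _ _)
  have hs : ∀ i, 0 ≤ q i - m i := fun i => sub_nonneg.mpr (min_le_right _ _)
  have hsum_r : ∑ i, (p i - m i) = δ := by rw [Finset.sum_sub_distrib, hp1]
  have hsum_s : ∑ i, (q i - m i) = δ := by rw [Finset.sum_sub_distrib, hq1]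
  obtain ⟨i₁, -, hi₁⟩ := Finset.exists_le_of_sum_le
    (Finset.nonempty_of_sum_ne_zero (hp1 ▸ one_ne_zero))
    (hp1.trans hq1.symm).le
  -- so `p - m` is carried by `d - 1` points
  have hri₁ : p i₁ - m i₁ = 0 := by simp [hm_def, min_eq_left hi₁]
  have hupper : ∑ i, negMulLog (p i) ≤ ∑ i, negMulLog (m i) + ∑ i, negMulLog (p i - m i) := by
    rw [← Finset.sum_add_distrib]
    refine Finset.sum_le_sum fun i _ => ?_
    simpa using negMulLog_add_le (hm0 i) (hr i)
  have hrest := sum_negMulLog_le_of_apply hr i₁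
  rw [hsum_r, hri₁, sub_zero, negMulLog_zero, zero_add] at hrest
  have hmsum : ∑ i, m i = 1 - δ := by rw [hδ_def]; ring
  have hlower : ∑ i, negMulLog (m i) + (1 - δ) * log (1 - δ) ≤ ∑ i, negMulLog (q i) := by
    rw [← hmsum, Finset.sum_mul, ← Finset.sum_add_distrib, hmsum]
    refine Finset.sum_le_sum fun i _ => ?_
    have hsi : q i - m i ≤ δ := hsum_s ▸ Finset.single_le_sum (fun j _ => hs j) (Finset.mem_univ i)
    simpa using negMulLog_add_mul_log_one_sub_le (hm0 i) (hs i) hsi (by linarith)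
  have h1δ : negMulLog (1 - δ) = -((1 - δ) * log (1 - δ)) := by rw [negMulLog, neg_mul]
  rw [qaryEntropy_eq_negMulLog]
  linarith

lemma sum_negMulLog_sub_le_qaryEntropy_of_sum_abs_sub_le (hcard : 2 ≤ Fintype.card ι)
    (hp : ∀ i, 0 ≤ p i) (hq : ∀ i, 0 ≤ q i) (hp1 : ∑ i, p i = 1) (hq1 : ∑ i, q i = 1)
    (hpq : ∑ i, |p i - q i| ≤ 2 * ε) (hε : ε ≤ 1 - 1 / Fintype.card ι) :
    ∑ i, negMulLog (p i) - ∑ i, negMulLog (q i) ≤ qaryEntropy (Fintype.card ι) ε := by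
  rw [sum_abs_sub_eq_two_mul_one_sub_sum_min hp1 hq1] at hpq
  have hδ0 : 0 ≤ 1 - ∑ i, min (p i) (q i) := by
    rw [sub_nonneg, ← hp1]; exact Finset.sum_le_sum fun i _ => min_le_left _ _
  have hε1 : ε < 1 := hε.trans_lt (sub_lt_self 1 (by positivity))
  refine (sum_negMulLog_sub_le_qaryEntropy hp hq hp1 hq1 (by linarith)).trans ?_
  exact (qaryEntropy_strictMonoOn hcard).monotoneOn ⟨hδ0, by linarith⟩ ⟨by linarith, hε⟩
    (by linarith)

lemma sum_negMulLog_le_qaryEntropy_of_le_one_sub (hcard : 2 ≤ Fintype.card ι)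
    {v : ι → ℝ} (hv : ∀ i, 0 ≤ v i) (hv1 : ∑ i, v i = 1) {i₀ : ι} (hi₀ : v i₀ ≤ 1 - ε)
    (hε : 1 - 1 / Fintype.card ι ≤ ε) (hε1 : ε ≤ 1) :
    ∑ i, negMulLog (v i) ≤ qaryEntropy (Fintype.card ι) ε := by
  have hsplit := sum_negMulLog_le_of_apply hv i₀
  rw [hv1] at hsplit
  have hentropy : ∑ i, negMulLog (v i) ≤ qaryEntropy (Fintype.card ι) (1 - v i₀) := by
    rw [qaryEntropy_eq_negMulLog, sub_sub_cancel]; linarith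
  exact hentropy.trans <| (qaryEntropy_strictAntiOn hcard).antitoneOn ⟨hε, hε1⟩
    ⟨by linarith, by linarith [hv i₀]⟩ (by linarith)

end Simplex

end Real

namespace Matrix

section Pinching

variable {n : Type*} [Fintype n] {A B U : Matrix n n ℂ} {M : Matrix n n ℝ}

def diagConj (U A : Matrix n n ℂ) : n → ℝ := fun i => ((star U * A * U) i i).re

lemma diagConj_sub : diagConj U (A - B) = diagConj U A - diagConj U B := by
  ext i; simp [diagConj, Matrix.mul_sub, Matrix.sub_mul]

lemma diagConj_neg : diagConj U (-A) = -diagConj U A := by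
  ext i; simp [diagConj]

variable [DecidableEq n]

lemma _root_.ConvexOn.sum_map_mulVec_le {s : Set ℝ} {f : ℝ → ℝ} (hf : ConvexOn ℝ s f)
    (hM : M ∈ doublyStochastic ℝ n) {x : n → ℝ} (hx : ∀ j, x j ∈ s) :
    ∑ i, f ((M *ᵥ x) i) ≤ ∑ j, f (x j) := by
  calc ∑ i, f ((M *ᵥ x) i) ≤ ∑ i, ∑ j, M i j * f (x j) := Finset.sum_le_sum fun i _ =>
        hf.map_sum_le (fun j _ => nonneg_of_mem_doublyStochastic hM)
          (sum_row_of_mem_doublyStochastic hM i) fun j _ => hx j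
    _ = ∑ j, f (x j) := by
        rw [Finset.sum_comm]
        simp [← Finset.sum_mul, sum_col_of_mem_doublyStochastic hM]

lemma _root_.ConcaveOn.sum_le_sum_map_mulVec {s : Set ℝ} {f : ℝ → ℝ} (hf : ConcaveOn ℝ s f)
    (hM : M ∈ doublyStochastic ℝ n) {x : n → ℝ} (hx : ∀ j, x j ∈ s) :
    ∑ j, f (x j) ≤ ∑ i, f ((M *ᵥ x) i) := by
  simpa using hf.neg.sum_map_mulVec_le hM hx

lemma le_mulVec_apply_of_mem_doublyStochastic (hM : M ∈ doublyStochastic ℝ n) {x : n → ℝ} {c : ℝ}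
    (hx : ∀ j, c ≤ x j) (i : n) : c ≤ (M *ᵥ x) i :=
  calc c = ∑ j, M i j * c := by rw [← Finset.sum_mul, sum_row_of_mem_doublyStochastic hM, one_mul]
    _ ≤ (M *ᵥ x) i := Finset.sum_le_sum fun j _ =>
        mul_le_mul_of_nonneg_left (hx j) (nonneg_of_mem_doublyStochastic hM)

lemma normSq_mem_doublyStochastic {C : Matrix n n ℂ} (hC : C ∈ unitaryGroup n ℂ) :
    (of fun i j => Complex.normSq (C i j)) ∈ doublyStochastic ℝ n := by
  have hrow : ∀ i, ∑ j, Complex.normSq (C i j) = 1 := fun i => by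
    have h := congrFun (congrFun (mem_unitaryGroup_iff.mp hC) i) i
    simp only [mul_apply, star_apply, RCLike.star_def, Complex.mul_conj, one_apply_eq] at h
    exact_mod_cast h
  have hcol : ∀ j, ∑ i, Complex.normSq (C i j) = 1 := fun j => by
    have h := congrFun (congrFun (mem_unitaryGroup_iff'.mp hC) j) j
    simp only [mul_apply, star_apply, RCLike.star_def, ← Complex.normSq_eq_conj_mul_self,
      one_apply_eq] at h
    exact_mod_cast h
  exact mem_doublyStochastic_iff_sum.mpr ⟨fun i j => Complex.normSq_nonneg _, hrow, hcol⟩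

lemma IsHermitian.exists_doublyStochastic_diagConj {A U : Matrix n n ℂ} (hA : A.IsHermitian)
    (hU : U ∈ unitaryGroup n ℂ) :
    ∃ M ∈ doublyStochastic ℝ n, diagConj U A = M *ᵥ hA.eigenvalues := by
  set W : Matrix n n ℂ := (hA.eigenvectorUnitary : Matrix n n ℂ)
  set C := star W * U
  have hC : C ∈ unitaryGroup n ℂ :=
    Submonoid.mul_mem _ (Unitary.star_mem hA.eigenvectorUnitary.2) hU
  refine ⟨(of fun i j => Complex.normSq (C i j))ᵀ,
    transpose_mem_doublyStochastic_iff.mpr (normSq_mem_doublyStochastic hC), funext fun i => ?_⟩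
  have hconj : star U * A * U = star C * diagonal (RCLike.ofReal ∘ hA.eigenvalues) * C := by
    conv_lhs => rw [hA.spectral_theorem, Unitary.conjStarAlgAut_apply]
    simp only [C, W, star_mul, star_star, Matrix.mul_assoc]
  rw [diagConj, hconj, Matrix.mul_assoc, mul_apply]
  simp only [diagonal_mul, star_apply, mulVec, dotProduct, transpose_apply, of_apply,
    Complex.re_sum]
  have hentry (z : ℂ) (t : ℝ) : (star z * (t * z)).re = Complex.normSq z * t := by
    rw [mul_left_comm, RCLike.star_def, ← Complex.normSq_eq_conj_mul_self, ← Complex.ofReal_mul,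
      Complex.ofReal_re, mul_comm]
  exact Finset.sum_congr rfl fun j _ => hentry _ _

lemma IsHermitian.diagConj_eigenvectorUnitary (hA : A.IsHermitian) :
    diagConj hA.eigenvectorUnitary A = hA.eigenvalues := by
  have h := hA.conjStarAlgAut_star_eigenvectorUnitary
  rw [Unitary.conjStarAlgAut_star_apply] at h
  ext i; simp [diagConj, h]

lemma IsHermitian.sum_abs_diagConj_le (hA : A.IsHermitian) (hU : U ∈ unitaryGroup n ℂ) :
    ∑ i, |diagConj U A i| ≤ ∑ j, |hA.eigenvalues j| := by
  obtain ⟨M, hM, hdiag⟩ := hA.exists_doublyStochastic_diagConj hU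
  simpa [hdiag] using (convexOn_univ_norm (E := ℝ)).sum_map_mulVec_le hM fun _ => trivial

lemma traceNorm_eq_sum_abs_eigenvalues (hA : A.IsHermitian) :
    traceNorm A = ∑ i, |hA.eigenvalues i| := dif_pos hA

lemma sum_abs_diagConj_le_traceNorm (hA : A.IsHermitian) (hU : U ∈ unitaryGroup n ℂ) :
    ∑ i, |diagConj U A i| ≤ traceNorm A :=
  traceNorm_eq_sum_abs_eigenvalues hA ▸ hA.sum_abs_diagConj_le hU

lemma traceNorm_neg (A : Matrix n n ℂ) : traceNorm (-A) = traceNorm A := by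
  by_cases hA : A.IsHermitian
  · have hA' : (-A).IsHermitian := hA.neg
    refine le_antisymm ?_ ?_
    · calc traceNorm (-A) = ∑ i, |diagConj hA'.eigenvectorUnitary (-A) i| := by
            rw [hA'.diagConj_eigenvectorUnitary, traceNorm_eq_sum_abs_eigenvalues hA']
        _ ≤ traceNorm A := by
            simpa [diagConj_neg] using
              sum_abs_diagConj_le_traceNorm hA hA'.eigenvectorUnitary.2
    · calc traceNorm A = ∑ i, |diagConj hA.eigenvectorUnitary (-A) i| := by
            simp [diagConj_neg, hA.diagConj_eigenvectorUnitary, traceNorm_eq_sum_abs_eigenvalues hA]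
        _ ≤ traceNorm (-A) := sum_abs_diagConj_le_traceNorm hA' hA.eigenvectorUnitary.2
  · have hA' : ¬(-A).IsHermitian := fun h => hA (by simpa using h.neg)
    simp [traceNorm, hA, hA']

lemma IsHermitian.exists_eigenvalue_le_diagConj [Nonempty n] (hA : A.IsHermitian)
    (hU : U ∈ unitaryGroup n ℂ) (j : n) : ∃ i, hA.eigenvalues i ≤ diagConj U A j := by
  obtain ⟨M, hM, hdiag⟩ := hA.exists_doublyStochastic_diagConj hU
  obtain ⟨i, -, hi⟩ := Finset.exists_min_image Finset.univ hA.eigenvalues Finset.univ_nonempty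
  exact ⟨i, hdiag ▸ le_mulVec_apply_of_mem_doublyStochastic hM
    (fun k => hi k (Finset.mem_univ k)) j⟩

end Pinching

end Matrix

namespace IsDensity

variable {n : Type*} [Fintype n] [DecidableEq n] {ρ ρ₁ ρ₂ U : Matrix n n ℂ} {ε : ℝ}

lemma sum_eigenvalues (h : IsDensity ρ) : ∑ i, h.1.1.eigenvalues i = 1 := by
  have htr := h.2.symm.trans h.1.1.trace_eq_sum_eigenvalues
  simpa using (congrArg Complex.re htr).symm

lemma vnEntropy_eq (h : IsDensity ρ) : vnEntropy ρ = ∑ i, negMulLog (h.1.1.eigenvalues i) := by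
  rw [vnEntropy, dif_pos h.1.1, eta_eq_negMulLog]

lemma vnEntropy_nonneg (h : IsDensity ρ) : 0 ≤ vnEntropy ρ := by
  rw [h.vnEntropy_eq]
  refine Finset.sum_nonneg fun i _ => negMulLog_nonneg (h.1.eigenvalues_nonneg i) ?_
  exact h.sum_eigenvalues ▸
    Finset.single_le_sum (fun j _ => h.1.eigenvalues_nonneg j) (Finset.mem_univ i)

lemma diagConj_nonneg (h : IsDensity ρ) (hU : U ∈ unitaryGroup n ℂ) (i : n) :
    0 ≤ diagConj U ρ i := by
  obtain ⟨M, hM, hdiag⟩ := h.1.1.exists_doublyStochastic_diagConj hU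
  exact hdiag ▸ le_mulVec_apply_of_mem_doublyStochastic hM h.1.eigenvalues_nonneg i

lemma sum_diagConj (h : IsDensity ρ) (hU : U ∈ unitaryGroup n ℂ) :
    ∑ i, diagConj U ρ i = 1 := by
  obtain ⟨M, hM, hdiag⟩ := h.1.1.exists_doublyStochastic_diagConj hU
  rw [hdiag, sum_mulVec_of_mem_doublyStochastic hM, h.sum_eigenvalues]

lemma vnEntropy_le_sum_negMulLog_diagConj (h : IsDensity ρ) (hU : U ∈ unitaryGroup n ℂ) :
    vnEntropy ρ ≤ ∑ i, negMulLog (diagConj U ρ i) := by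
  obtain ⟨M, hM, hdiag⟩ := h.1.1.exists_doublyStochastic_diagConj hU
  rw [h.vnEntropy_eq, hdiag]
  exact concaveOn_negMulLog.sum_le_sum_map_mulVec hM fun i => h.1.eigenvalues_nonneg i

/-- In the eigenbasis of `ρ₁ - ρ₂`, the diagonal of `ρ₁` has mass at least `ε` on the indices
where `ρ₁ - ρ₂` is positive, and there is an index where it is not. -/
lemma exists_eigenvalue_le_one_sub [Nonempty n] (h1 : IsDensity ρ₁) (h2 : IsDensity ρ₂)
    (htr : 2 * ε ≤ traceNorm (ρ₁ - ρ₂)) : ∃ i, h1.1.1.eigenvalues i ≤ 1 - ε := by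
  have hΔ : (ρ₁ - ρ₂).IsHermitian := h1.1.1.sub h2.1.1
  set V : Matrix n n ℂ := (hΔ.eigenvectorUnitary : Matrix n n ℂ)
  have hV : V ∈ unitaryGroup n ℂ := hΔ.eigenvectorUnitary.2
  have hν : hΔ.eigenvalues = diagConj V ρ₁ - diagConj V ρ₂ := by
    rw [← diagConj_sub, hΔ.diagConj_eigenvectorUnitary]
  have hνg : ∀ j, max (hΔ.eigenvalues j) 0 ≤ diagConj V ρ₁ j := fun j =>
    max_le (by simpa [hν] using h2.diagConj_nonneg hV j) (h1.diagConj_nonneg hV j)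
  have hνsum : ∑ j, hΔ.eigenvalues j = 0 := by
    simp [hν, Finset.sum_sub_distrib, h1.sum_diagConj hV, h2.sum_diagConj hV]
  obtain ⟨j₀, -, hj₀⟩ := Finset.exists_le_of_sum_le (f := hΔ.eigenvalues) (g := 0)
    Finset.univ_nonempty (by simp [hνsum])
  have hmass : ε ≤ 1 - diagConj V ρ₁ j₀ := by
    rw [traceNorm_eq_sum_abs_eigenvalues hΔ, Finset.sum_abs_eq_two_mul_sum_max_zero hνsum,
      ← Finset.sum_erase (f := fun j => max (hΔ.eigenvalues j) 0) _ (max_eq_right hj₀)] at htr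
    rw [← h1.sum_diagConj hV, ← Finset.sum_erase_eq_sub (f := diagConj V ρ₁)
      (Finset.mem_univ j₀)]
    linarith [Finset.sum_le_sum fun j (_ : j ∈ Finset.univ.erase j₀) => hνg j]
  obtain ⟨i, hi⟩ := h1.1.1.exists_eigenvalue_le_diagConj hV j₀
  exact ⟨i, by linarith⟩

lemma vnEntropy_sub_le_qaryEntropy_of_le_one_sub_inv (hcard : 2 ≤ Fintype.card n)
    (h1 : IsDensity ρ₁) (h2 : IsDensity ρ₂) (htr : traceNorm (ρ₁ - ρ₂) ≤ 2 * ε)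
    (hε : ε ≤ 1 - 1 / Fintype.card n) :
    vnEntropy ρ₁ - vnEntropy ρ₂ ≤ qaryEntropy (Fintype.card n) ε := by
  set U : Matrix n n ℂ := (h2.1.1.eigenvectorUnitary : Matrix n n ℂ)
  have hU : U ∈ unitaryGroup n ℂ := h2.1.1.eigenvectorUnitary.2
  have hq : diagConj U ρ₂ = h2.1.1.eigenvalues := h2.1.1.diagConj_eigenvectorUnitary
  have hpq : ∑ i, |diagConj U ρ₁ i - diagConj U ρ₂ i| ≤ 2 * ε :=
    (diagConj_sub (U := U) ▸ sum_abs_diagConj_le_traceNorm (h1.1.1.sub h2.1.1) hU).trans htr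
  have hclassical := sum_negMulLog_sub_le_qaryEntropy_of_sum_abs_sub_le hcard
    (h1.diagConj_nonneg hU) (h2.diagConj_nonneg hU) (h1.sum_diagConj hU) (h2.sum_diagConj hU)
    hpq hε
  rw [hq, ← h2.vnEntropy_eq] at hclassical
  linarith [h1.vnEntropy_le_sum_negMulLog_diagConj hU]

lemma vnEntropy_sub_le_qaryEntropy (hcard : 2 ≤ Fintype.card n) (h1 : IsDensity ρ₁)
    (h2 : IsDensity ρ₂) (htr : traceNorm (ρ₁ - ρ₂) = 2 * ε) (hε : ε ≤ 1) :
    vnEntropy ρ₁ - vnEntropy ρ₂ ≤ qaryEntropy (Fintype.card n) ε := by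
  rcases le_or_gt ε (1 - 1 / Fintype.card n) with hsmall | hlarge
  · exact vnEntropy_sub_le_qaryEntropy_of_le_one_sub_inv hcard h1 h2 htr.le hsmall
  · have : Nonempty n := Fintype.card_pos_iff.mp (by omega)
    obtain ⟨i, hi⟩ := h1.exists_eigenvalue_le_one_sub h2 htr.ge
    have hS1 := sum_negMulLog_le_qaryEntropy_of_le_one_sub hcard h1.1.eigenvalues_nonneg
      h1.sum_eigenvalues hi hlarge.le hε
    rw [← h1.vnEntropy_eq] at hS1
    linarith [h2.vnEntropy_nonneg]

end IsDensity

/-- Audenaert–Fannes: `|S(ρ₁) - S(ρ₂)| ≤ ε log(d - 1) + h(ε)`. -/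
theorem audenaert_fannes {d : ℕ} (hd : 2 ≤ d) (ρ₁ ρ₂ : Matrix (Fin d) (Fin d) ℂ)
    (h1 : IsDensity ρ₁) (h2 : IsDensity ρ₂)
    (ε : ℝ) (hε : ε ∈ Set.Ioo (0 : ℝ) 1)
    (htr : traceNorm (ρ₁ - ρ₂) / 2 = ε) :
    |vnEntropy ρ₁ - vnEntropy ρ₂| ≤ ε * Real.log ((d : ℝ) - 1) + binEnt ε := by
  have hcard : 2 ≤ Fintype.card (Fin d) := by rwa [Fintype.card_fin]
  have hbound : ε * Real.log ((d : ℝ) - 1) + binEnt ε = qaryEntropy (Fintype.card (Fin d)) ε := by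
    rw [binEnt_eq_binEntropy, Fintype.card_fin, qaryEntropy]
    push_cast
    ring
  have htr₁₂ : traceNorm (ρ₁ - ρ₂) = 2 * ε := by linarith
  have htr₂₁ : traceNorm (ρ₂ - ρ₁) = 2 * ε := by rw [← neg_sub, traceNorm_neg, htr₁₂]
  rw [hbound, abs_sub_le_iff]
  exact ⟨h1.vnEntropy_sub_le_qaryEntropy hcard h2 htr₁₂ hε.2.le,
    h2.vnEntropy_sub_le_qaryEntropy hcard h1 htr₂₁ hε.2.le⟩
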